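/- (Interpolation.) Let f ∈ ℂ[x_1,…,x_n] be a polynomial of degree d (not necessarily homogeneous) and let γ_0, …, γ_d ∈ ℂ be distinct. Suppose that for each i = 0,…,d the substituted polynomial f(γ_i, x_2, …, x_n) belongs to the border class Σ^[s]Λ^[e]Σ. Then f belongs to the border class Σ^[s(d+1)^3]Λ^[e+d]Σ. -/

import Mathlib

/-
Lagrange interpolation in the first variable writes `f = ∑ᵢ ℓᵢ(x₁) f(γᵢ, x₂, …, xₙ)` with
`deg ℓᵢ ≤ d`, so `f` is approximated by a sum of `s (d + 1)²` terms `b x₁ᵏ Lᴱ` with `k ≤ d`,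
`E ≤ e` and `L` affine over `ℂ((ε))`. Each such term is, modulo `ε`, a sum of `d + 1` powers
`(β (Y + t Z))^(E + k)` with `Y = ε^(-kr) L` and `Z = ε^(Er) x₁`: weighting by a row of an inverse
Vandermonde matrix in the nodes `t` cancels every term `Yᵖ Z^(E+k-p)` with `p > E` of the binomial
expansions, the term `p = E` is `x₁ᵏ Lᴱ` because the powers of `ε` cancel, and the terms with
`p < E` carry `ε^(r(E+k)(E-p))`, which outweighs the poles of `Lᵖ` once `r` is large.
-/

open MvPolynomial

noncomputable section

/-- All Laurent-series coefficients of `F` lie in `ℂ[[ε]]`, i.e. they have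
no terms of negative order. -/
def HasRegularCoeffs {σ : Type*} (F : MvPolynomial σ (LaurentSeries ℂ)) : Prop :=
  ∀ (m : σ →₀ ℕ) (k : ℤ), k < 0 → (F.coeff m).coeff k = 0

/-- `F` has all coefficients in `ℂ[[ε]]` and `F ≡ f (mod ε)`, i.e. substituting
`ε = 0` into the coefficients of `F` yields `f`. -/
def ApproxTo {σ : Type*} (F : MvPolynomial σ (LaurentSeries ℂ)) (f : MvPolynomial σ ℂ) : Prop :=
  HasRegularCoeffs F ∧ ∀ m : σ →₀ ℕ, (F.coeff m).coeff 0 = f.coeff m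

/-- The Waring rank of `f` as a form of degree `d`: the least `r` such that `f` is a
sum of `r` `d`-th powers of homogeneous linear forms over `ℂ`. -/
def waringRank {n : ℕ} (f : MvPolynomial (Fin n) ℂ) (d : ℕ) : ℕ :=
  sInf {r | ∃ ℓ : Fin r → MvPolynomial (Fin n) ℂ,
    (∀ i, (ℓ i).IsHomogeneous 1) ∧ f = ∑ i, ℓ i ^ d}

/-- The border Waring rank of `f` as a form of degree `d`: the least `r` such that there
are homogeneous linear forms `ℓ₁, …, ℓ_r` with coefficients in `ℂ((ε))` whose sum of
`d`-th powers has all coefficients in `ℂ[[ε]]` and is `≡ f (mod ε)`. -/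
def borderWaringRank {n : ℕ} (f : MvPolynomial (Fin n) ℂ) (d : ℕ) : ℕ :=
  sInf {r | ∃ ℓ : Fin r → MvPolynomial (Fin n) (LaurentSeries ℂ),
    (∀ i, (ℓ i).IsHomogeneous 1) ∧ ApproxTo (∑ i, ℓ i ^ d) f}

/-- Membership in the border class `Σ^[s]Λ^[e]Σ`: `g` is approximated by a sum of `s`
powers, with exponents at most `e`, of affine linear forms over `ℂ((ε))`. -/
def MemBorderSLS {N : ℕ} (g : MvPolynomial (Fin N) ℂ) (s e : ℕ) : Prop :=
  ∃ (L : Fin s → MvPolynomial (Fin N) (LaurentSeries ℂ)) (E : Fin s → ℕ),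
    (∀ i, (L i).totalDegree ≤ 1) ∧ (∀ i, E i ≤ e) ∧ ApproxTo (∑ i, L i ^ E i) g

namespace MvPolynomial

theorem totalDegree_C_mul_le {R σ : Type*} [CommSemiring R] (x : R) (F : MvPolynomial σ R) :
    (C x * F).totalDegree ≤ F.totalDegree := by
  rw [C_mul']; exact totalDegree_smul_le x F

variable {σ R : Type*} [CommRing R]

/-- For the `ε`-adic valuation `HahnSeries.addVal ℤ K` on `K((ε))`, membership in
`coeffValGE v 1` is the congruence `≡ 0 (mod ε)` of the paper. -/
def coeffValGE (v : AddValuation R (WithTop ℤ)) (q : ℤ) : AddSubgroup (MvPolynomial σ R) where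
  carrier := {F | ∀ m, (q : WithTop ℤ) ≤ v (F.coeff m)}
  zero_mem' m := by simp
  add_mem' hF hG m := by rw [coeff_add]; exact v.map_le_add (hF m) (hG m)
  neg_mem' hF m := by rw [coeff_neg, v.map_neg]; exact hF m

variable {v : AddValuation R (WithTop ℤ)} {q q' : ℤ} {F G : MvPolynomial σ R}

theorem mem_coeffValGE : F ∈ coeffValGE v q ↔ ∀ m, (q : WithTop ℤ) ≤ v (F.coeff m) :=
  Iff.rfl

theorem coeffValGE_anti (h : q' ≤ q) : coeffValGE (σ := σ) v q ≤ coeffValGE v q' :=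
  fun _ hF m => le_trans (WithTop.coe_le_coe.mpr h) (hF m)

theorem monomial_mem_coeffValGE (m : σ →₀ ℕ) {r : R} (hr : (q : WithTop ℤ) ≤ v r) :
    monomial m r ∈ coeffValGE v q := by
  classical
  intro m'
  rw [coeff_monomial]
  split_ifs <;> simp [hr]

theorem C_mem_coeffValGE {r : R} (hr : (q : WithTop ℤ) ≤ v r) :
    C r ∈ coeffValGE (σ := σ) v q :=
  monomial_mem_coeffValGE 0 hr

theorem X_mem_coeffValGE (j : σ) : X j ∈ coeffValGE v 0 :=
  monomial_mem_coeffValGE _ (by simp)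

theorem mul_mem_coeffValGE (hF : F ∈ coeffValGE v q) (hG : G ∈ coeffValGE v q') :
    F * G ∈ coeffValGE v (q + q') := by
  classical
  intro m
  rw [coeff_mul]
  refine v.map_le_sum fun x _ => ?_
  rw [v.map_mul, WithTop.coe_add]
  exact add_le_add (hF _) (hG _)

theorem pow_mem_coeffValGE (hF : F ∈ coeffValGE v q) (n : ℕ) :
    F ^ n ∈ coeffValGE v (n * q) := by
  induction n with
  | zero => simpa using C_mem_coeffValGE (σ := σ) (v := v) (q := 0) (r := 1) (by simp)
  | succ n ih => simpa [pow_succ, add_mul] using mul_mem_coeffValGE ih hF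

theorem C_mul_mem_coeffValGE {r : R} (hr : 0 ≤ v r) (hF : F ∈ coeffValGE v q) :
    C r * F ∈ coeffValGE v q := by
  simpa using mul_mem_coeffValGE (C_mem_coeffValGE (q := 0) (by simpa using hr)) hF

theorem exists_mem_coeffValGE (F : MvPolynomial σ R) : ∃ q : ℤ, F ∈ coeffValGE v q := by
  obtain ⟨q, hq⟩ := (F.support.image fun m => (v (F.coeff m)).untopD 0).bddBelow
  refine ⟨q, fun m => ?_⟩
  by_cases hm : m ∈ F.support
  · have := hq (Finset.mem_image_of_mem _ hm)
    cases h : v (F.coeff m) with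
    | top => exact le_top
    | coe a => rw [h] at this; exact WithTop.coe_le_coe.mpr this
  · rw [notMem_support_iff.mp hm, v.map_zero]; exact le_top

end MvPolynomial

namespace LaurentSeries

variable {K : Type*} [Field K]

theorem le_addVal_iff {x : LaurentSeries K} {q : ℤ} :
    (q : WithTop ℤ) ≤ HahnSeries.addVal ℤ K x ↔ ∀ j < q, x.coeff j = 0 := by
  rw [HahnSeries.addVal_apply, HahnSeries.le_orderTop_iff_forall]
  simp only [WithTop.coe_lt_coe]

theorem le_addVal_single (z : ℤ) (c : K) :
    (z : WithTop ℤ) ≤ HahnSeries.addVal ℤ K (HahnSeries.single z c) := by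
  rw [HahnSeries.addVal_apply]; exact HahnSeries.orderTop_single_le

theorem zero_le_addVal_C (x : K) : 0 ≤ HahnSeries.addVal ℤ K (HahnSeries.C x) := by
  simpa using le_addVal_single 0 x

end LaurentSeries

theorem MvPolynomial.map_C_mem_coeffValGE_zero {K σ : Type*} [Field K] (f : MvPolynomial σ K) :
    map HahnSeries.C f ∈ coeffValGE (HahnSeries.addVal ℤ K) 0 := fun m => by
  rw [coeff_map, HahnSeries.C_apply]
  exact LaurentSeries.le_addVal_single 0 _

section Approx

variable {σ : Type*} {F G J : MvPolynomial σ (LaurentSeries ℂ)} {f g : MvPolynomial σ ℂ}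

local notation "𝔪" => coeffValGE (σ := σ) (HahnSeries.addVal ℤ ℂ) 1

theorem approxTo_iff : ApproxTo F f ↔ F - map HahnSeries.C f ∈ 𝔪 := by
  simp only [ApproxTo, HasRegularCoeffs, mem_coeffValGE, LaurentSeries.le_addVal_iff, coeff_sub,
    coeff_map, HahnSeries.coeff_sub, HahnSeries.C_apply, HahnSeries.coeff_single]
  constructor
  · rintro ⟨hreg, h0⟩ m j hj
    obtain hj | rfl : j < 0 ∨ j = 0 := by omega
    · simp [hreg m j hj, hj.ne]
    · simp [h0 m]
  · intro h
    refine ⟨fun m j hj => ?_, fun m => ?_⟩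
    · simpa [hj.ne] using h m j (by omega)
    · simpa [sub_eq_zero] using h m 0 one_pos

theorem approxTo_map (f : MvPolynomial σ ℂ) : ApproxTo (map HahnSeries.C f) f :=
  approxTo_iff.mpr (by rw [sub_self]; exact zero_mem _)

theorem ApproxTo.add_of_mem (hF : ApproxTo F f) (hJ : J ∈ 𝔪) : ApproxTo (F + J) f :=
  approxTo_iff.mpr (by rw [add_sub_right_comm F]; exact add_mem (approxTo_iff.mp hF) hJ)

theorem ApproxTo.sum {ι : Type*} (s : Finset ι) {F : ι → MvPolynomial σ (LaurentSeries ℂ)}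
    {f : ι → MvPolynomial σ ℂ} (h : ∀ i ∈ s, ApproxTo (F i) (f i)) :
    ApproxTo (∑ i ∈ s, F i) (∑ i ∈ s, f i) := by
  rw [approxTo_iff, map_sum, ← Finset.sum_sub_distrib (f := F)]
  exact sum_mem fun i hi => approxTo_iff.mp (h i hi)

theorem ApproxTo.mul (hF : ApproxTo F f) (hG : ApproxTo G g) : ApproxTo (F * G) (f * g) := by
  rw [approxTo_iff] at *
  have hF0 : F ∈ coeffValGE (HahnSeries.addVal ℤ ℂ) 0 := by
    simpa using add_mem (coeffValGE_anti zero_le_one hF) (map_C_mem_coeffValGE_zero f)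
  have h₁ : F * (G - map HahnSeries.C g) ∈ 𝔪 := by simpa using mul_mem_coeffValGE hF0 hG
  have h₂ : (F - map HahnSeries.C f) * map HahnSeries.C g ∈ 𝔪 := by
    simpa using mul_mem_coeffValGE hF (map_C_mem_coeffValGE_zero g)
  convert add_mem h₁ h₂ using 1
  rw [map_mul]
  ring

end Approx

theorem Matrix.sum_inv_vandermonde_mul_pow {K : Type*} [Field K] {N : ℕ} {v : Fin N → K}
    (hv : Function.Injective v) (k j : Fin N) :
    ∑ i, (Matrix.vandermonde v)⁻¹ k i * v i ^ (j : ℕ) = if k = j then 1 else 0 := by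
  have h := Matrix.nonsing_inv_mul (Matrix.vandermonde v)
    (isUnit_iff_ne_zero.mpr (Matrix.det_vandermonde_ne_zero_iff.mpr hv))
  simpa [Matrix.mul_apply, Matrix.one_apply] using congrFun (congrFun h k) j

theorem Polynomial.eval_eq_sum_inv_vandermonde {K S : Type*} [Field K] [CommRing S]
    [Algebra K S] {d : ℕ} {γ : Fin (d + 1) → K} (hγ : Function.Injective γ) {p : Polynomial S}
    (hp : p.natDegree ≤ d) (y : S) :
    p.eval y = ∑ i, ∑ k : Fin (d + 1), algebraMap K S ((Matrix.vandermonde γ)⁻¹ k i) *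
      y ^ (k : ℕ) * p.eval (algebraMap K S (γ i)) := by
  have hsum : ∀ z : S, p.eval z = ∑ j : Fin (d + 1), p.coeff j * z ^ (j : ℕ) := fun z => by
    rw [eval_eq_sum_range' (by omega : p.natDegree < d + 1), ← Fin.sum_univ_eq_sum_range]
  simp only [hsum, Finset.mul_sum, ← map_pow]
  rw [Finset.sum_comm]
  refine Finset.sum_congr rfl fun k _ => ?_
  calc p.coeff k * y ^ (k : ℕ)
      = ∑ j : Fin (d + 1), algebraMap K S (∑ i, (Matrix.vandermonde γ)⁻¹ k i * γ i ^ (j : ℕ)) *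
          (p.coeff j * y ^ (k : ℕ)) := by
        simp [Matrix.sum_inv_vandermonde_mul_pow hγ]
    _ = _ := by
        rw [Finset.sum_comm]
        simp only [map_sum, map_mul, map_pow, Finset.sum_mul]
        exact Finset.sum_congr rfl fun i _ => Finset.sum_congr rfl fun j _ => by ring

namespace MvPolynomial

variable {R σ : Type*} [CommRing R] [DecidableEq σ]

def asPolynomialIn (a : σ) : MvPolynomial σ R →ₐ[R] Polynomial (MvPolynomial σ R) :=
  aeval fun j => if j = a then Polynomial.X else Polynomial.C (X j)

theorem eval_asPolynomialIn (a : σ) (y : MvPolynomial σ R) (f : MvPolynomial σ R) :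
    (asPolynomialIn a f).eval y = aeval (fun j => if j = a then y else X j) f := by
  rw [← Polynomial.coe_aeval_eq_eval, ← AlgHom.restrictScalars_apply R, ← AlgHom.comp_apply]
  congr 1
  refine algHom_ext fun j => ?_
  by_cases h : j = a <;> simp [asPolynomialIn, h]

theorem natDegree_asPolynomialIn_le (a : σ) (f : MvPolynomial σ R) :
    (asPolynomialIn a f).natDegree ≤ f.degreeOf a := by
  have h : asPolynomialIn (R := R) a = (Polynomial.mapAlgHom (rename Subtype.val)).comp
      ((optionEquivLeft R {b // b ≠ a}).toAlgHom.comp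
        (rename (Equiv.optionSubtypeNe a).symm)) := by
    refine algHom_ext fun j => ?_
    by_cases h : j = a
    · subst h; simp [asPolynomialIn]
    · simp [asPolynomialIn, h]
  rw [h, degreeOf_eq_natDegree a f]
  exact Polynomial.natDegree_map_le

theorem eq_sum_inv_vandermonde_mul_aeval {K : Type*} [Field K] {d : ℕ} {γ : Fin (d + 1) → K}
    (hγ : Function.Injective γ) (a : σ) {f : MvPolynomial σ K} (hf : f.degreeOf a ≤ d) :
    f = ∑ i, ∑ k : Fin (d + 1), C ((Matrix.vandermonde γ)⁻¹ k i) * X a ^ (k : ℕ) *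
      aeval (fun j => if j = a then C (γ i) else X j) f := by
  have h := Polynomial.eval_eq_sum_inv_vandermonde hγ
    ((natDegree_asPolynomialIn_le a f).trans hf) (X a)
  have hX : (fun j => if j = a then X a else X j : σ → MvPolynomial σ K) = X := by
    ext1 j; split_ifs with h <;> simp [h]
  simpa only [eval_asPolynomialIn, algebraMap_eq, hX, aeval_X_left_apply] using h

end MvPolynomial

theorem sum_mul_add_mul_pow_eq {S R ι : Type*} [CommRing S] [CommRing R] [Fintype ι]
    (ψ : S →+* R) {c t : ι → S} {k : ℕ}
    (hc : ∀ i ≤ k, ∑ m, c m * t m ^ i = if i = k then 1 else 0) (Y Z : R) (E : ℕ) :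
    ∑ m, ψ (c m) * (Y + ψ (t m) * Z) ^ (E + k) =
      (E + k).choose k * (Y ^ E * Z ^ k) +
        ∑ p ∈ Finset.range E,
          ψ ((E + k).choose p * ∑ m, c m * t m ^ (E + k - p)) * (Y ^ p * Z ^ (E + k - p)) := by
  set g : ℕ → R := fun p => ψ ((E + k).choose p * ∑ m, c m * t m ^ (E + k - p)) *
    (Y ^ p * Z ^ (E + k - p))
  have hexpand : ∑ m, ψ (c m) * (Y + ψ (t m) * Z) ^ (E + k) =
      ∑ p ∈ Finset.range (E + k + 1), g p := by
    simp only [g, add_pow, Finset.mul_sum, map_mul, map_sum, map_pow, map_natCast]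
    rw [Finset.sum_comm]
    refine Finset.sum_congr rfl fun p _ => ?_
    rw [Finset.sum_mul]
    exact Finset.sum_congr rfl fun m _ => by ring
  have htop : ∀ p ∈ Finset.Ico E (E + k + 1), p ≠ E → g p = 0 := fun p hp hpE => by
    rw [Finset.mem_Ico] at hp
    simp only [g]
    rw [hc (E + k - p) (by omega), if_neg (by omega), mul_zero, map_zero, zero_mul]
  rw [hexpand, ← Finset.sum_range_add_sum_Ico g (by omega : E ≤ E + k + 1),
    Finset.sum_eq_single_of_mem E (by simp) htop, add_comm]
  simp only [g, Nat.add_sub_cancel_left, hc k le_rfl, if_pos, mul_one, map_natCast,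
    Nat.choose_symm_add]

section SumAffinePow

variable {K σ : Type*} [Field K]

local notation "𝔐" q => coeffValGE (σ := σ) (HahnSeries.addVal ℤ K) q

def IsSumAffinePowModEps (ι : Type*) [Fintype ι] (e : ℕ)
    (F : MvPolynomial σ (LaurentSeries K)) : Prop :=
  ∃ (A : ι → MvPolynomial σ (LaurentSeries K)) (E : ι → ℕ),
    (∀ i, (A i).totalDegree ≤ 1) ∧ (∀ i, E i ≤ e) ∧ ∑ i, A i ^ E i - F ∈ 𝔐 1

variable {ι κ : Type*} [Fintype ι] [Fintype κ] {e : ℕ} {F : MvPolynomial σ (LaurentSeries K)}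

theorem IsSumAffinePowModEps.mono (h : IsSumAffinePowModEps ι e F) {e' : ℕ} (he : e ≤ e') :
    IsSumAffinePowModEps ι e' F :=
  let ⟨A, E, hA, hE, hF⟩ := h
  ⟨A, E, hA, fun i => (hE i).trans he, hF⟩

theorem IsSumAffinePowModEps.of_equiv (h : IsSumAffinePowModEps ι e F) (φ : ι ≃ κ) :
    IsSumAffinePowModEps κ e F :=
  let ⟨A, E, hA, hE, hF⟩ := h
  ⟨A ∘ φ.symm, E ∘ φ.symm, fun _ => hA _, fun _ => hE _, by
    rwa [← φ.symm.sum_comp (fun i => A i ^ E i)] at hF⟩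

theorem IsSumAffinePowModEps.sum {F : κ → MvPolynomial σ (LaurentSeries K)}
    (h : ∀ x, IsSumAffinePowModEps ι e (F x)) :
    IsSumAffinePowModEps (κ × ι) e (∑ x, F x) := by
  choose A E hA hE hF using h
  refine ⟨fun p => A p.1 p.2, fun p => E p.1 p.2, fun _ => hA _ _, fun _ => hE _ _, ?_⟩
  rw [Fintype.sum_prod_type, ← Finset.sum_sub_distrib]
  exact sum_mem fun x _ => hF x

theorem C_single_mul_pow_mul_C_single_mul_X_pow (L : MvPolynomial σ (LaurentSeries K)) (j : σ) (k E : ℕ) (r : ℤ) :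
    (C (HahnSeries.single (-(k * r)) (1 : K)) * L) ^ E *
      (C (HahnSeries.single (E * r) (1 : K)) * X j) ^ k = X j ^ k * L ^ E := by
  simp only [mul_pow, ← map_pow, HahnSeries.single_pow, one_pow]
  rw [mul_mul_mul_comm, ← map_mul, HahnSeries.single_mul_single, one_mul,
    show E • -(k * r) + k • (E * r) = 0 by simp only [nsmul_eq_mul]; ring,
    HahnSeries.single_zero_one, map_one, one_mul, mul_comm]

theorem C_single_mul_pow_mul_C_single_mul_X_pow_mem {L : MvPolynomial σ (LaurentSeries K)} {w : ℤ} (hL : L ∈ 𝔐 w) (j : σ)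
    {k E p : ℕ} (hp : p < E) {r : ℤ} (hr : E * |w| < r) :
    (C (HahnSeries.single (-(k * r)) (1 : K)) * L) ^ p *
      (C (HahnSeries.single (E * r) (1 : K)) * X j) ^ (E + k - p) ∈ 𝔐 1 := by
  have hY := pow_mem_coeffValGE (mul_mem_coeffValGE
    (C_mem_coeffValGE (LaurentSeries.le_addVal_single (-(k * r)) (1 : K))) hL) p
  have hZ := pow_mem_coeffValGE (mul_mem_coeffValGE
    (C_mem_coeffValGE (LaurentSeries.le_addVal_single (E * r) (1 : K))) (X_mem_coeffValGE j))
    (E + k - p)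
  refine coeffValGE_anti ?_ (mul_mem_coeffValGE hY hZ)
  have h₁ : r ≤ r * ((E + k) * (E - p)) :=
    le_mul_of_one_le_right ((mul_nonneg (by positivity) (abs_nonneg w)).trans hr.le)
      (one_le_mul_of_one_le_of_one_le (by omega) (by omega))
  have h₂ : -(p * |w|) ≤ p * w := by nlinarith [neg_abs_le w]
  have h₃ : p * |w| ≤ E * |w| := mul_le_mul_of_nonneg_right (by omega) (abs_nonneg w)
  rw [Nat.cast_sub (by omega), Nat.cast_add]
  linarith [show (p : ℤ) * (-(k * r) + w) + (E + k - p) * (E * r + 0) =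
    r * ((E + k) * (E - p)) + p * w by ring]

theorem isSumAffinePowModEps_C_mul_X_pow_mul_pow [IsAlgClosed K] [CharZero K] {d k E : ℕ}
    (hk : k ≤ d) (hD : 0 < E + k) (a : K) (j : σ) {L : MvPolynomial σ (LaurentSeries K)}
    (hL : L.totalDegree ≤ 1) :
    IsSumAffinePowModEps (Fin (d + 1)) (E + k) (C (HahnSeries.C a) * (X j ^ k * L ^ E)) := by
  obtain ⟨w, hw⟩ := exists_mem_coeffValGE (v := HahnSeries.addVal ℤ K) L
  set r : ℤ := E * |w| + 1
  set Y := C (HahnSeries.single (-(k * r)) (1 : K)) * L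
  set Z := C (HahnSeries.single (E * r) (1 : K)) * (X j : MvPolynomial σ (LaurentSeries K))
  set t : Fin (d + 1) → K := fun m => ((m : ℕ) : K)
  have ht : Function.Injective t := Nat.cast_injective.comp Fin.val_injective
  set c : Fin (d + 1) → K := fun m => (Matrix.vandermonde t)⁻¹ ⟨k, by omega⟩ m
  have hc : ∀ i ≤ k, ∑ m, c m * t m ^ i = if i = k then 1 else 0 := fun i hi => by
    simpa [Fin.ext_iff, eq_comm] using
      Matrix.sum_inv_vandermonde_mul_pow ht ⟨k, by omega⟩ ⟨i, by omega⟩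
  have hch : ((E + k).choose k : K) ≠ 0 := Nat.cast_ne_zero.mpr (Nat.choose_pos (by omega)).ne'
  choose β hβ using fun m => IsAlgClosed.exists_pow_nat_eq (a * c m / ((E + k).choose k : K)) hD
  refine ⟨fun m => C (HahnSeries.C (β m)) * (Y + C (HahnSeries.C (t m)) * Z), fun _ => E + k,
    fun m => ?_, fun _ => le_rfl, ?_⟩
  · refine (totalDegree_C_mul_le _ _).trans <| (totalDegree_add _ _).trans <| max_le ?_ ?_
    · exact (totalDegree_C_mul_le _ _).trans hL
    · exact (totalDegree_C_mul_le _ _).trans <|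
        (totalDegree_C_mul_le _ _).trans (totalDegree_X j).le
  have hpow : ∀ m, (C (HahnSeries.C (β m)) * (Y + C (HahnSeries.C (t m)) * Z)) ^ (E + k) =
      C (HahnSeries.C (a / (E + k).choose k)) *
        (C (HahnSeries.C (c m)) * (Y + C (HahnSeries.C (t m)) * Z) ^ (E + k)) := fun m => by
    rw [mul_pow, ← map_pow, ← map_pow, hβ m, mul_div_right_comm, map_mul, map_mul, mul_assoc]
  have hconst : C (HahnSeries.C (a / (E + k).choose k)) *
      ((E + k).choose k : MvPolynomial σ (LaurentSeries K)) = C (HahnSeries.C a) := by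
    rw [← map_natCast (C.comp HahnSeries.C), RingHom.comp_apply, ← map_mul, ← map_mul,
      div_mul_cancel₀ a hch]
  have hexpand := sum_mul_add_mul_pow_eq (C.comp HahnSeries.C) hc Y Z E
  simp only [RingHom.comp_apply] at hexpand
  rw [Finset.sum_congr rfl fun m _ => hpow m, ← Finset.mul_sum, hexpand, mul_add, ← mul_assoc,
    hconst, show Y ^ E * Z ^ k = X j ^ k * L ^ E from C_single_mul_pow_mul_C_single_mul_X_pow L j k E r,
    add_sub_cancel_left]
  exact C_mul_mem_coeffValGE (LaurentSeries.zero_le_addVal_C _) <| sum_mem fun p hp =>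
    C_mul_mem_coeffValGE (LaurentSeries.zero_le_addVal_C _)
      (C_single_mul_pow_mul_C_single_mul_X_pow_mem hw j (Finset.mem_range.mp hp) (lt_add_one _))

theorem isSumAffinePowModEps_C_mul_X_pow_mul_pow_of_le [IsAlgClosed K] [CharZero K]
    {d e k E : ℕ} (hk : k ≤ d) (hE : E ≤ e) (hed : 0 < e + d) (a : K) (j : σ)
    {L : MvPolynomial σ (LaurentSeries K)} (hL : L.totalDegree ≤ 1) :
    IsSumAffinePowModEps (Fin (d + 1)) (e + d) (C (HahnSeries.C a) * (X j ^ k * L ^ E)) := by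
  obtain ⟨rfl, rfl⟩ | hD : (E = 0 ∧ k = 0) ∨ 0 < E + k := by omega
  · -- a constant is the first power of an affine form
    simpa using (isSumAffinePowModEps_C_mul_X_pow_mul_pow (d := d) (Nat.zero_le d) one_pos a j
      (L := 1) (by simp)).mono hed
  · exact (isSumAffinePowModEps_C_mul_X_pow_mul_pow hk hD a j hL).mono (by omega)

end SumAffinePow

theorem memBorderSLS_of_isSumAffinePowModEps {N s e : ℕ}
    {F : MvPolynomial (Fin N) (LaurentSeries ℂ)} {f : MvPolynomial (Fin N) ℂ}
    (hF : IsSumAffinePowModEps (Fin s) e F) (hFf : ApproxTo F f) : MemBorderSLS f s e := by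
  obtain ⟨A, E, hA, hE, hJ⟩ := hF
  exact ⟨A, E, hA, hE, by simpa only [add_sub_cancel F] using hFf.add_of_mem hJ⟩

/-- Interpolation: if `f` has degree `d` and each substitution `f(γᵢ, x₂, …, xₙ)` at
`d + 1` distinct values `γ₀, …, γ_d` of the first variable lies in the border class
`Σ^[s]Λ^[e]Σ`, then `f` lies in the border class `Σ^[s(d+1)^3]Λ^[e+d]Σ`. -/
theorem statement15 {n d s e : ℕ} (f : MvPolynomial (Fin (n + 1)) ℂ)
    (hdeg : f.totalDegree = d)
    (γ : Fin (d + 1) → ℂ) (hγ : Function.Injective γ)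
    (hsub : ∀ i : Fin (d + 1),
      MemBorderSLS
        (aeval (fun j : Fin (n + 1) =>
          if j = 0 then (C (γ i) : MvPolynomial (Fin (n + 1)) ℂ) else X j) f) s e) :
    MemBorderSLS f (s * (d + 1) ^ 3) (e + d) := by
  rcases Nat.eq_zero_or_pos d with rfl | hd
  · have hfix : aeval (fun j => if j = 0 then C (γ 0) else X j) f = f := by
      rw [totalDegree_eq_zero_iff_eq_C.mp hdeg, aeval_C, algebraMap_eq]
    simpa only [hfix, zero_add, one_pow, mul_one, add_zero] using hsub 0
  choose L E hL hE hLf using hsub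
  set b := (Matrix.vandermonde γ)⁻¹
  set F := ∑ i, ∑ k : Fin (d + 1),
    map HahnSeries.C (C (b k i) * X 0 ^ (k : ℕ)) * ∑ j, L i j ^ E i j
  have hFf : ApproxTo F f := by
    rw [eq_sum_inv_vandermonde_mul_aeval hγ 0 (f := f) (hdeg ▸ degreeOf_le_totalDegree f 0)]
    exact ApproxTo.sum _ fun i _ => ApproxTo.sum _ fun k _ => (approxTo_map _).mul (hLf i)
  have hFsum : F = ∑ i, ∑ j, ∑ k : Fin (d + 1),
      C (HahnSeries.C (b k i)) * (X 0 ^ (k : ℕ) * L i j ^ E i j) := by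
    simp only [F, map_mul, map_C, map_pow, map_X, Finset.mul_sum]
    exact Finset.sum_congr rfl fun i _ => by rw [Finset.sum_comm]; simp only [mul_assoc]
  have hF : IsSumAffinePowModEps (Fin (d + 1) × Fin s × Fin (d + 1) × Fin (d + 1)) (e + d) F := by
    rw [hFsum]
    exact .sum fun i => .sum fun j => .sum fun k =>
      isSumAffinePowModEps_C_mul_X_pow_mul_pow_of_le k.is_le (hE i j) (by omega) _ _ (hL i j)
  have hcard :
      Fintype.card (Fin (d + 1) × Fin s × Fin (d + 1) × Fin (d + 1)) = s * (d + 1) ^ 3 := by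
    simp only [Fintype.card_prod, Fintype.card_fin]; ring
  exact memBorderSLS_of_isSumAffinePowModEps (hF.of_equiv (Fintype.equivFinOfCardEq hcard)) hFf
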